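/- Let λ/μ be a skew shape all of whose rows have length one or two, and suppose λ_i − μ_i = 2 for some i. Then the number of standard Young tableaux of shape λ/μ whose reading word avoids the pattern 123 equals the number of standard Young tableaux whose reading word avoids 123 of each of the following two shapes: (a) ⟨λ_1 + 1, …, λ_i + 1, λ_{i+1}, λ_{i+2}, …⟩ / ⟨μ_1 + 1, …, μ_i + 1, μ_{i+1}, μ_{i+2}, …⟩, and (b) ⟨λ_1 + 1, …, λ_{i−1} + 1, λ_i, λ_{i+1}, …⟩ / ⟨μ_1 + 1, …, μ_{i−1} + 1, μ_i, μ_{i+1}, …⟩. -/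

import Mathlib

/-- The word `w` (a sequence of distinct values) contains the pattern `p`. -/
def ContainsPat {N s : ℕ} {α : Type*} [LinearOrder α]
    (w : Fin N → α) (p : Fin s → ℕ) : Prop :=
  ∃ f : Fin s → Fin N, StrictMono f ∧ ∀ a b : Fin s, p a < p b ↔ w (f a) < w (f b)

/-- The word `w` avoids the pattern `p`. -/
def AvoidsPat {N s : ℕ} {α : Type*} [LinearOrder α]
    (w : Fin N → α) (p : Fin s → ℕ) : Prop :=
  ¬ ContainsPat w p

/-- The monotone (identity) pattern `1 2 ⋯ m`. -/
def MonoPat (m : ℕ) : Fin m → ℕ := fun i => (i : ℕ)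

/-- Position of the entry `w_{i,j}` (with `i`, `j` 0-indexed) of a word of length `n * k`
written in `n` consecutive blocks of length `k`. -/
def Lpos (n k i j : ℕ) (hi : i < n) (hj : j < k) : Fin (n * k) :=
  ⟨i * k + j, by
    calc i * k + j < i * k + k := by omega
      _ = (i + 1) * k := by ring
      _ ≤ n * k := Nat.mul_le_mul (Nat.succ_le_of_lt hi) (le_refl k)⟩

/-- Membership in `L_{n,k}`: conditions (L1) and (L2). -/
def MemL (n k : ℕ) (w : Equiv.Perm (Fin (n * k))) : Prop :=
  (∀ (i j : ℕ) (hi : i < n) (hj : j + 1 < k),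
      w (Lpos n k i j hi (by omega)) < w (Lpos n k i (j + 1) hi hj)) ∧
  (∀ (i j : ℕ) (hi : i + 1 < n) (hj : j + 1 < k),
      w (Lpos n k (i + 1) j hi (by omega)) < w (Lpos n k i (j + 1) (by omega) hj))

/-- Position of the entry `w_{i,j}` (`i`, `j` 0-indexed) among the `n` blocks of length `k`
following the initial block of length `r`. -/
def LrPos (n k r i j : ℕ) (hi : i < n) (hj : j < k) : Fin (n * k + r) :=
  ⟨r + (i * k + j), by
    have h : i * k + j < n * k := by
      calc i * k + j < i * k + k := by omega
        _ = (i + 1) * k := by ring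
        _ ≤ n * k := Nat.mul_le_mul (Nat.succ_le_of_lt hi) (le_refl k)
    omega⟩

/-- Membership in `L_{n,k;r}`: conditions (L1′) and (L2′). -/
def MemLr (n k r : ℕ) (w : Equiv.Perm (Fin (n * k + r))) : Prop :=
  (∀ (j : ℕ) (hj : j + 1 < r), w ⟨j, by omega⟩ < w ⟨j + 1, by omega⟩) ∧
  (∀ (i j : ℕ) (hi : i < n) (hj : j + 1 < k),
      w (LrPos n k r i j hi (by omega)) < w (LrPos n k r i (j + 1) hi hj)) ∧
  (∀ (i j : ℕ) (hi : i + 1 < n) (hj : j + 1 < k),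
      w (LrPos n k r (i + 1) j hi (by omega)) < w (LrPos n k r i (j + 1) (by omega) hj)) ∧
  (∀ (j : ℕ) (hj : j < r) (h : r + j < n * k + r), w ⟨r + j, h⟩ < w ⟨j, by omega⟩)

/-- `w` is an (up-down) alternating permutation: `w_1 < w_2 > w_3 < w_4 > ⋯`. -/
def IsAlternating {m : ℕ} (w : Equiv.Perm (Fin m)) : Prop :=
  ∀ (i : ℕ) (h : i + 1 < m),
    (Even i → w ⟨i, Nat.lt_of_succ_lt h⟩ < w ⟨i + 1, h⟩) ∧
    (¬ Even i → w ⟨i + 1, h⟩ < w ⟨i, Nat.lt_of_succ_lt h⟩)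

/-- `f : ℕ → ℕ` (0-indexed parts) is a partition: weakly decreasing, eventually zero. -/
def IsPartitionFun (f : ℕ → ℕ) : Prop :=
  (∀ i, f (i + 1) ≤ f i) ∧ ∃ N, ∀ i, N ≤ i → f i = 0

/-- The rectangular partition `⟨m^n⟩` as a function. -/
def RectShape (n m : ℕ) : ℕ → ℕ := fun i => if i < n then m else 0

/-- `c = (i, j)` (0-indexed row `i`, column `j`) is a box of the skew diagram `λ/μ`. -/
def IsCell (lam mu : ℕ → ℕ) (c : ℕ × ℕ) : Prop :=
  mu c.1 ≤ c.2 ∧ c.2 < lam c.1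

/-- A standard Young tableau of skew shape `λ/μ`: a filling of the boxes by `1, …, m`
(each used once, `m` = number of boxes), strictly increasing along rows and columns.
Boxes outside of the shape are filled with `0`. -/
structure SkewSYT (lam mu : ℕ → ℕ) where
  entry : ℕ × ℕ → ℕ
  entry_outside : ∀ c, ¬ IsCell lam mu c → entry c = 0
  entry_pos : ∀ c, IsCell lam mu c → 1 ≤ entry c
  entry_inj : ∀ c c', IsCell lam mu c → IsCell lam mu c' → entry c = entry c' → c = c'
  entry_init : ∀ c, IsCell lam mu c → ∀ v, 1 ≤ v → v < entry c →
      ∃ c', IsCell lam mu c' ∧ entry c' = v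
  row_strict : ∀ i j j', IsCell lam mu (i, j) → IsCell lam mu (i, j') → j < j' →
      entry (i, j) < entry (i, j')
  col_strict : ∀ i i' j, IsCell lam mu (i, j) → IsCell lam mu (i', j) → i < i' →
      entry (i, j) < entry (i', j)

/-- `c` comes strictly before `c'` in reading order (last row first, rows left to right). -/
def ReadLT (c c' : ℕ × ℕ) : Prop :=
  c'.1 < c.1 ∨ (c.1 = c'.1 ∧ c.2 < c'.2)

/-- The reading word of the tableau `T` contains the pattern `p`. -/
def ReadingContains {lam mu : ℕ → ℕ} (T : SkewSYT lam mu) {s : ℕ} (p : Fin s → ℕ) : Prop :=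
  ∃ c : Fin s → ℕ × ℕ,
    (∀ a, IsCell lam mu (c a)) ∧
    (∀ a b : Fin s, a < b → ReadLT (c a) (c b)) ∧
    (∀ a b : Fin s, p a < p b ↔ T.entry (c a) < T.entry (c b))

/-- Number of boxes of the skew diagram `λ/μ`. -/
noncomputable def NumCells (lam mu : ℕ → ℕ) : ℕ := Set.ncard {c : ℕ × ℕ | IsCell lam mu c}

/-- The `j`-th part (1-indexed) of the conjugate partition of `λ`:
the number of rows of `λ` of length at least `j`. -/
noncomputable def ConjPart (lam : ℕ → ℕ) (j : ℕ) : ℕ := Set.ncard {i : ℕ | j ≤ lam i}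

/-!
Moving rows `0, …, r` of `λ/μ` one step to the right is a bijection of cells that keeps every
cell in its row and preserves the reading order, so relabelling along it carries tableaux to
tableaux and keeps every pattern of the reading word, as long as columns stay increasing.
Moving right this is automatic: the new column condition between rows `r` and `r + 1` reads
`T(r, j) < T(r + 1, j + 1)`, and the cell `(r + 1, j)` lies in between. Moving back it reads
`T(r, j + 1) < T(r + 1, j)`, and a failure would give a `123`: with the left neighbour of
`(r + 1, j)` as its `1`, or, when `(r + 1, j)` starts its row, with `(r + 1, j)` as its `1` and
`(r, j + 2)` as its `3`; the latter is a cell because row `r` reaches two steps beyond the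
start of row `r + 1`. Both moves of the theorem are of this kind, with `r = i` and
`r = i - 1`, since row `i` has length two.
-/

instance (lam mu : ℕ → ℕ) : DecidablePred (IsCell lam mu) :=
  fun c => inferInstanceAs (Decidable (mu c.1 ≤ c.2 ∧ c.2 < lam c.1))

theorem IsCell.of_le_of_le {lam mu : ℕ → ℕ} (hlam : Antitone lam) (hmu : Antitone mu)
    {r k r' j : ℕ} (hr : IsCell lam mu (r, j)) (hr' : IsCell lam mu (r', j))
    (hrk : r ≤ k) (hkr' : k ≤ r') : IsCell lam mu (k, j) :=
  ⟨(hmu hrk).trans hr.1, hr'.2.trans_le (hlam hkr')⟩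

theorem readLT_trichotomous (a b : ℕ × ℕ) : ReadLT a b ∨ a = b ∨ ReadLT b a := by
  obtain ⟨r, j⟩ := a; obtain ⟨r', j'⟩ := b
  simp only [ReadLT, Prod.mk.injEq]
  omega

theorem readLT_irrefl (a : ℕ × ℕ) : ¬ ReadLT a a := by
  unfold ReadLT; omega

theorem ReadLT.asymm {a b : ℕ × ℕ} (h : ReadLT a b) : ¬ ReadLT b a := by
  unfold ReadLT at *; omega

theorem ReadLT.trans {a b c : ℕ × ℕ} (hab : ReadLT a b) (hbc : ReadLT b c) : ReadLT a c := by
  unfold ReadLT at *; omega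

def ColStrict (lam mu : ℕ → ℕ) (e : ℕ × ℕ → ℕ) : Prop :=
  ∀ i i' j, IsCell lam mu (i, j) → IsCell lam mu (i', j) → i < i' → e (i, j) < e (i', j)

theorem ColStrict.of_succ {lam mu : ℕ → ℕ} (hlam : Antitone lam) (hmu : Antitone mu)
    {e : ℕ × ℕ → ℕ}
    (h : ∀ r j, IsCell lam mu (r, j) → IsCell lam mu (r + 1, j) → e (r, j) < e (r + 1, j)) :
    ColStrict lam mu e := by
  intro i i' j hi hi' hii'
  induction i', hii' using Nat.le_induction with
  | base => exact h i j hi hi'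
  | succ k hik ih =>
    have hk : IsCell lam mu (k, j) := hi.of_le_of_le hlam hmu hi' (by omega) k.le_succ
    exact (ih hk).trans (h k j hk hi')

structure IsRowIso (lam' mu' lam mu : ℕ → ℕ) (f : ℕ × ℕ → ℕ × ℕ) : Prop where
  bijOn : Set.BijOn f {c | IsCell lam' mu' c} {c | IsCell lam mu c}
  fst_eq : ∀ c, IsCell lam' mu' c → (f c).1 = c.1
  readLT : ∀ c c', IsCell lam' mu' c → IsCell lam' mu' c' → ReadLT c c' → ReadLT (f c) (f c')

namespace IsRowIso

variable {lam mu lam' mu' : ℕ → ℕ} {f : ℕ × ℕ → ℕ × ℕ}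

theorem isCell (hf : IsRowIso lam' mu' lam mu f) {c : ℕ × ℕ} (hc : IsCell lam' mu' c) :
    IsCell lam mu (f c) :=
  hf.bijOn.mapsTo hc

theorem readLT_iff (hf : IsRowIso lam' mu' lam mu f) {c c' : ℕ × ℕ} (hc : IsCell lam' mu' c)
    (hc' : IsCell lam' mu' c') : ReadLT (f c) (f c') ↔ ReadLT c c' := by
  refine ⟨fun h => ?_, hf.readLT c c' hc hc'⟩
  rcases readLT_trichotomous c c' with h' | rfl | h'
  · exact h'
  · exact absurd h (readLT_irrefl _)
  · exact absurd (hf.readLT c' c hc' hc h') h.asymm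

end IsRowIso

namespace SkewSYT

variable {lam mu lam' mu' : ℕ → ℕ}

theorem ext_entry {T T' : SkewSYT lam mu} (h : T.entry = T'.entry) : T = T' := by
  cases T; cases T'; cases h; rfl

theorem entry_lt_of_row_lt (T : SkewSYT lam mu) {c c' : ℕ × ℕ} (hc : IsCell lam mu c)
    (hc' : IsCell lam mu c') (hrow : c.1 = c'.1) (hlt : c.2 < c'.2) : T.entry c < T.entry c' := by
  obtain ⟨i, j⟩ := c; obtain ⟨i', j'⟩ := c'
  simp only at hrow hlt
  subst hrow
  exact T.row_strict i j j' hc hc' hlt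

def comap (T : SkewSYT lam mu) (f : ℕ × ℕ → ℕ × ℕ) (hf : IsRowIso lam' mu' lam mu f)
    (hcol : ColStrict lam' mu' (T.entry ∘ f)) : SkewSYT lam' mu' where
  entry c := if IsCell lam' mu' c then T.entry (f c) else 0
  entry_outside c hc := if_neg hc
  entry_pos c hc := by
    rw [if_pos hc]
    exact T.entry_pos _ (hf.isCell hc)
  entry_inj c c' hc hc' he := by
    rw [if_pos hc, if_pos hc'] at he
    exact hf.bijOn.injOn hc hc' (T.entry_inj _ _ (hf.isCell hc) (hf.isCell hc') he)
  entry_init c hc v hv hvc := by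
    rw [if_pos hc] at hvc
    obtain ⟨d, hd, rfl⟩ := T.entry_init _ (hf.isCell hc) v hv hvc
    obtain ⟨d', hd', rfl⟩ := hf.bijOn.surjOn hd
    exact ⟨d', hd', if_pos hd'⟩
  row_strict i j j' hc hc' hjj' := by
    rw [if_pos hc, if_pos hc']
    have hread := hf.readLT _ _ hc hc' (Or.inr ⟨rfl, hjj'⟩)
    have hrow : (f (i, j)).1 = (f (i, j')).1 := (hf.fst_eq _ hc).trans (hf.fst_eq _ hc').symm
    refine T.entry_lt_of_row_lt (hf.isCell hc) (hf.isCell hc') hrow ?_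
    unfold ReadLT at hread
    omega
  col_strict i i' j hc hc' hii' := by
    rw [if_pos hc, if_pos hc']
    exact hcol i i' j hc hc' hii'

variable {f : ℕ × ℕ → ℕ × ℕ}

theorem comap_entry (T : SkewSYT lam mu) (hf : IsRowIso lam' mu' lam mu f)
    (hcol : ColStrict lam' mu' (T.entry ∘ f)) {c : ℕ × ℕ} (hc : IsCell lam' mu' c) :
    (T.comap f hf hcol).entry c = T.entry (f c) :=
  if_pos hc

theorem readingContains_comap_iff (T : SkewSYT lam mu) (hf : IsRowIso lam' mu' lam mu f)
    (hcol : ColStrict lam' mu' (T.entry ∘ f)) {s : ℕ} (p : Fin s → ℕ) :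
    ReadingContains (T.comap f hf hcol) p ↔ ReadingContains T p := by
  constructor
  · rintro ⟨c, hc, hord, hent⟩
    refine ⟨f ∘ c, fun a => hf.isCell (hc a), fun a b hab => hf.readLT _ _ (hc a) (hc b)
      (hord a b hab), fun a b => ?_⟩
    rw [hent, comap_entry _ _ _ (hc a), comap_entry _ _ _ (hc b), Function.comp_apply,
      Function.comp_apply]
  · rintro ⟨c, hc, hord, hent⟩
    choose d hd hfd using fun a => hf.bijOn.surjOn (hc a)
    refine ⟨d, hd, fun a b hab => ?_, fun a b => ?_⟩
    · rw [← hf.readLT_iff (hd a) (hd b), hfd, hfd]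
      exact hord a b hab
    · rw [hent, comap_entry _ _ _ (hd a), comap_entry _ _ _ (hd b), hfd, hfd]

theorem comap_comap (T : SkewSYT lam mu) {g : ℕ × ℕ → ℕ × ℕ} (hf : IsRowIso lam' mu' lam mu f)
    (hg : IsRowIso lam mu lam' mu' g)
    (hfg : Set.RightInvOn g f {c | IsCell lam mu c}) {hcol : ColStrict lam' mu' (T.entry ∘ f)}
    {hcol' : ColStrict lam mu ((T.comap f hf hcol).entry ∘ g)} :
    (T.comap f hf hcol).comap g hg hcol' = T := by
  refine ext_entry (funext fun c => ?_)
  by_cases hc : IsCell lam mu c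
  · rw [comap_entry _ _ _ hc, comap_entry _ _ _ (hg.isCell hc), hfg hc]
  · rw [(comap _ _ _ _).entry_outside c hc, T.entry_outside c hc]

end SkewSYT

theorem card_avoiding_eq_of_rowIso {lam mu lam' mu' : ℕ → ℕ} {s : ℕ} (p : Fin s → ℕ)
    {f g : ℕ × ℕ → ℕ × ℕ} (hf : IsRowIso lam' mu' lam mu f) (hg : IsRowIso lam mu lam' mu' g)
    (hgf : Set.InvOn g f {c | IsCell lam' mu' c} {c | IsCell lam mu c})
    (hf_col : ∀ T : SkewSYT lam mu, ¬ ReadingContains T p → ColStrict lam' mu' (T.entry ∘ f))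
    (hg_col : ∀ T : SkewSYT lam' mu', ¬ ReadingContains T p → ColStrict lam mu (T.entry ∘ g)) :
    Nat.card {T : SkewSYT lam mu // ¬ ReadingContains T p} =
      Nat.card {T : SkewSYT lam' mu' // ¬ ReadingContains T p} := by
  refine Nat.card_congr
    ⟨fun T => ⟨T.1.comap f hf (hf_col T.1 T.2), (T.1.readingContains_comap_iff hf _ p).not.2 T.2⟩,
      fun T => ⟨T.1.comap g hg (hg_col T.1 T.2), (T.1.readingContains_comap_iff hg _ p).not.2 T.2⟩,
      fun T => Subtype.ext ?_, fun T => Subtype.ext ?_⟩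
  · dsimp only
    exact T.1.comap_comap hf hg hgf.2
  · dsimp only
    exact T.1.comap_comap hg hf hgf.1

theorem SkewSYT.readingContains_123 {lam mu : ℕ → ℕ} (T : SkewSYT lam mu) {a b c : ℕ × ℕ}
    (ha : IsCell lam mu a) (hb : IsCell lam mu b) (hc : IsCell lam mu c)
    (hab : ReadLT a b) (hbc : ReadLT b c) (eab : T.entry a < T.entry b)
    (ebc : T.entry b < T.entry c) : ReadingContains T ![1, 2, 3] := by
  refine ⟨![a, b, c], fun x => by fin_cases x <;> assumption, fun x y hxy => ?_, fun x y => ?_⟩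
  · fin_cases x <;> fin_cases y <;> simp at hxy ⊢ <;> first | assumption | exact hab.trans hbc
  · fin_cases x <;> fin_cases y <;> simp <;> omega

section Shift

def shiftThrough (r : ℕ) (f : ℕ → ℕ) : ℕ → ℕ := fun ℓ => if ℓ ≤ r then f ℓ + 1 else f ℓ

def cellShift (r : ℕ) (c : ℕ × ℕ) : ℕ × ℕ := if c.1 ≤ r then (c.1, c.2 + 1) else c

def cellUnshift (r : ℕ) (c : ℕ × ℕ) : ℕ × ℕ := if c.1 ≤ r then (c.1, c.2 - 1) else c

variable {lam mu : ℕ → ℕ} {r : ℕ}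

theorem Antitone.shiftThrough {f : ℕ → ℕ} (hf : Antitone f) : Antitone (shiftThrough r f) := by
  refine antitone_nat_of_succ_le fun ℓ => ?_
  have : f (ℓ + 1) ≤ f ℓ := hf ℓ.le_succ
  unfold _root_.shiftThrough
  split_ifs <;> omega

theorem isCell_shiftThrough_of_le {k j : ℕ} (hk : k ≤ r) :
    IsCell (shiftThrough r lam) (shiftThrough r mu) (k, j + 1) ↔ IsCell lam mu (k, j) := by
  simp only [IsCell, shiftThrough, if_pos hk]
  omega

theorem isCell_shiftThrough_of_lt {k j : ℕ} (hk : r < k) :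
    IsCell (shiftThrough r lam) (shiftThrough r mu) (k, j) ↔ IsCell lam mu (k, j) := by
  simp only [IsCell, shiftThrough, if_neg hk.not_ge]

theorem one_le_of_isCell_shiftThrough {k j : ℕ} (hk : k ≤ r)
    (hc : IsCell (shiftThrough r lam) (shiftThrough r mu) (k, j)) : 1 ≤ j := by
  have := hc.1
  simp only [shiftThrough, if_pos hk] at this
  omega

theorem cellShift_of_le {k j : ℕ} (hk : k ≤ r) : cellShift r (k, j) = (k, j + 1) := if_pos hk

theorem cellShift_of_lt {k j : ℕ} (hk : r < k) : cellShift r (k, j) = (k, j) :=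
  if_neg hk.not_ge

theorem cellUnshift_of_le {k j : ℕ} (hk : k ≤ r) : cellUnshift r (k, j) = (k, j - 1) :=
  if_pos hk

theorem cellUnshift_of_lt {k j : ℕ} (hk : r < k) : cellUnshift r (k, j) = (k, j) :=
  if_neg hk.not_ge

theorem isCell_cellShift {c : ℕ × ℕ} (hc : IsCell lam mu c) :
    IsCell (shiftThrough r lam) (shiftThrough r mu) (cellShift r c) := by
  obtain ⟨k, j⟩ := c
  by_cases hk : k ≤ r
  · simpa [cellShift, hk] using (isCell_shiftThrough_of_le hk).2 hc
  · simpa [cellShift, hk] using (isCell_shiftThrough_of_lt (not_le.1 hk)).2 hc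

theorem isCell_cellUnshift {c : ℕ × ℕ}
    (hc : IsCell (shiftThrough r lam) (shiftThrough r mu) c) :
    IsCell lam mu (cellUnshift r c) := by
  obtain ⟨k, j⟩ := c
  by_cases hk : k ≤ r
  · obtain ⟨j, rfl⟩ := Nat.exists_eq_add_of_le' (one_le_of_isCell_shiftThrough hk hc)
    simpa [cellUnshift, hk] using (isCell_shiftThrough_of_le hk).1 hc
  · simpa [cellUnshift, hk] using (isCell_shiftThrough_of_lt (not_le.1 hk)).1 hc

theorem invOn_cellShift :
    Set.InvOn (cellUnshift r) (cellShift r) {c | IsCell lam mu c}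
      {c | IsCell (shiftThrough r lam) (shiftThrough r mu) c} := by
  refine ⟨fun c _ => ?_, fun c hc => ?_⟩
  · obtain ⟨k, j⟩ := c
    by_cases hk : k ≤ r <;> simp [cellShift, cellUnshift, hk]
  · obtain ⟨k, j⟩ := c
    by_cases hk : k ≤ r
    · have := one_le_of_isCell_shiftThrough hk hc
      simp only [cellShift, cellUnshift, if_pos hk, Prod.mk.injEq, true_and]
      omega
    · simp [cellShift, cellUnshift, hk]

theorem isRowIso_cellShift :
    IsRowIso lam mu (shiftThrough r lam) (shiftThrough r mu) (cellShift r) where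
  bijOn := invOn_cellShift.bijOn (fun _ => isCell_cellShift) (fun _ => isCell_cellUnshift)
  fst_eq c _ := by unfold cellShift; split_ifs <;> rfl
  readLT := by
    rintro ⟨k, j⟩ ⟨k', j'⟩ - - h
    unfold ReadLT cellShift at *
    split_ifs <;> dsimp only <;> omega

theorem isRowIso_cellUnshift :
    IsRowIso (shiftThrough r lam) (shiftThrough r mu) lam mu (cellUnshift r) where
  bijOn := invOn_cellShift.symm.bijOn (fun _ => isCell_cellUnshift) (fun _ => isCell_cellShift)
  fst_eq c _ := by unfold cellUnshift; split_ifs <;> rfl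
  readLT := by
    rintro ⟨k, j⟩ ⟨k', j'⟩ hc hc' h
    have h1 : k ≤ r → 1 ≤ j := fun hk => one_le_of_isCell_shiftThrough hk hc
    have h2 : k' ≤ r → 1 ≤ j' := fun hk => one_le_of_isCell_shiftThrough hk hc'
    unfold ReadLT cellUnshift at *
    split_ifs <;> dsimp only <;> omega

theorem colStrict_entry_comp_cellUnshift (hlam : Antitone lam) (hmu : Antitone mu)
    (T : SkewSYT lam mu) :
    ColStrict (shiftThrough r lam) (shiftThrough r mu) (T.entry ∘ cellUnshift r) := by
  refine ColStrict.of_succ hlam.shiftThrough hmu.shiftThrough fun k j hk hk' => ?_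
  simp only [Function.comp_apply]
  obtain hkr | rfl | hrk := lt_trichotomy k r
  · obtain ⟨j, rfl⟩ := Nat.exists_eq_add_of_le' (one_le_of_isCell_shiftThrough hkr.le hk)
    rw [cellUnshift_of_le hkr.le, cellUnshift_of_le hkr, Nat.add_sub_cancel]
    exact T.col_strict k (k + 1) j ((isCell_shiftThrough_of_le hkr.le).1 hk)
      ((isCell_shiftThrough_of_le hkr).1 hk') k.lt_succ_self
  · obtain ⟨j, rfl⟩ := Nat.exists_eq_add_of_le' (one_le_of_isCell_shiftThrough le_rfl hk)
    rw [cellUnshift_of_le le_rfl, cellUnshift_of_lt k.lt_succ_self, Nat.add_sub_cancel]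
    have hk : IsCell lam mu (k, j) := (isCell_shiftThrough_of_le le_rfl).1 hk
    have hk' : IsCell lam mu (k + 1, j + 1) := (isCell_shiftThrough_of_lt k.lt_succ_self).1 hk'
    have hbelow : IsCell lam mu (k + 1, j) :=
      ⟨(hmu k.le_succ).trans hk.1, j.lt_succ_self.trans hk'.2⟩
    exact (T.col_strict k (k + 1) j hk hbelow k.lt_succ_self).trans
      (T.row_strict (k + 1) j (j + 1) hbelow hk' j.lt_succ_self)
  · rw [cellUnshift_of_lt hrk, cellUnshift_of_lt (hrk.trans k.lt_succ_self)]
    exact T.col_strict k (k + 1) j ((isCell_shiftThrough_of_lt hrk).1 hk)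
      ((isCell_shiftThrough_of_lt (hrk.trans k.lt_succ_self)).1 hk') k.lt_succ_self

theorem SkewSYT.entry_lt_of_not_readingContains_123
    (hr : mu (r + 1) + 2 ≤ lam r) (T : SkewSYT (shiftThrough r lam) (shiftThrough r mu))
    (hT : ¬ ReadingContains T ![1, 2, 3]) {j : ℕ} (hj : IsCell lam mu (r, j))
    (hj' : IsCell lam mu (r + 1, j)) : T.entry (r, j + 1) < T.entry (r + 1, j) := by
  have hup := (isCell_shiftThrough_of_le le_rfl).2 hj
  have hdown := (isCell_shiftThrough_of_lt r.lt_succ_self).2 hj'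
  have hne : T.entry (r, j + 1) ≠ T.entry (r + 1, j) := fun h => by
    simpa using congrArg Prod.fst (T.entry_inj _ _ hup hdown h)
  obtain ⟨hmu_r, -⟩ : mu r ≤ j ∧ j < lam r := hj
  obtain ⟨hmu_r', hlam_r'⟩ : mu (r + 1) ≤ j ∧ j < lam (r + 1) := hj'
  refine hne.lt_of_le (not_lt.1 fun hlt => hT ?_)
  rcases hmu_r'.lt_or_eq with hmuj | hmuj
  · have hleft : IsCell (shiftThrough r lam) (shiftThrough r mu) (r + 1, j - 1) :=
      (isCell_shiftThrough_of_lt r.lt_succ_self).2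
        (show mu (r + 1) ≤ j - 1 ∧ j - 1 < lam (r + 1) by omega)
    exact T.readingContains_123 hleft hdown hup (Or.inr ⟨rfl, by omega⟩) (Or.inl r.lt_succ_self)
      (T.row_strict _ _ _ hleft hdown (by omega)) hlt
  · have hright : IsCell (shiftThrough r lam) (shiftThrough r mu) (r, j + 1 + 1) :=
      (isCell_shiftThrough_of_le le_rfl).2 (show mu r ≤ j + 1 ∧ j + 1 < lam r by omega)
    exact T.readingContains_123 hdown hup hright (Or.inl r.lt_succ_self) (Or.inr ⟨rfl, by omega⟩)
      hlt (T.row_strict _ _ _ hup hright (by omega))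

theorem colStrict_entry_comp_cellShift (hlam : Antitone lam) (hmu : Antitone mu)
    (hr : mu (r + 1) + 2 ≤ lam r) (T : SkewSYT (shiftThrough r lam) (shiftThrough r mu))
    (hT : ¬ ReadingContains T ![1, 2, 3]) : ColStrict lam mu (T.entry ∘ cellShift r) := by
  refine ColStrict.of_succ hlam hmu fun k j hk hk' => ?_
  simp only [Function.comp_apply]
  obtain hkr | rfl | hrk := lt_trichotomy k r
  · rw [cellShift_of_le hkr.le, cellShift_of_le hkr]
    exact T.col_strict k (k + 1) (j + 1) ((isCell_shiftThrough_of_le hkr.le).2 hk)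
      ((isCell_shiftThrough_of_le hkr).2 hk') k.lt_succ_self
  · rw [cellShift_of_le le_rfl, cellShift_of_lt k.lt_succ_self]
    exact T.entry_lt_of_not_readingContains_123 hr hT hk hk'
  · rw [cellShift_of_lt hrk, cellShift_of_lt (hrk.trans k.lt_succ_self)]
    exact T.col_strict k (k + 1) j ((isCell_shiftThrough_of_lt hrk).2 hk)
      ((isCell_shiftThrough_of_lt (hrk.trans k.lt_succ_self)).2 hk') k.lt_succ_self

theorem card_avoiding_123_shiftThrough (hlam : Antitone lam) (hmu : Antitone mu)
    (hr : mu (r + 1) + 2 ≤ lam r) :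
    Nat.card {T : SkewSYT lam mu // ¬ ReadingContains T ![1, 2, 3]} =
      Nat.card {T : SkewSYT (shiftThrough r lam) (shiftThrough r mu) //
        ¬ ReadingContains T ![1, 2, 3]} :=
  card_avoiding_eq_of_rowIso _ isRowIso_cellUnshift isRowIso_cellShift invOn_cellShift.symm
    (fun T _ => colStrict_entry_comp_cellUnshift hlam hmu T)
    (colStrict_entry_comp_cellShift hlam hmu hr)

end Shift

theorem stmt_19_general (lam mu : ℕ → ℕ)
    (hlam : IsPartitionFun lam) (hmu : IsPartitionFun mu)
    (i : ℕ) (hi : lam i - mu i = 2) :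
    (Nat.card {T : SkewSYT lam mu // ¬ ReadingContains T ![1, 2, 3]} =
      Nat.card {T : SkewSYT (fun ℓ => if ℓ ≤ i then lam ℓ + 1 else lam ℓ)
            (fun ℓ => if ℓ ≤ i then mu ℓ + 1 else mu ℓ) //
          ¬ ReadingContains T ![1, 2, 3]}) ∧
    (Nat.card {T : SkewSYT lam mu // ¬ ReadingContains T ![1, 2, 3]} =
      Nat.card {T : SkewSYT (fun ℓ => if ℓ < i then lam ℓ + 1 else lam ℓ)
            (fun ℓ => if ℓ < i then mu ℓ + 1 else mu ℓ) //
          ¬ ReadingContains T ![1, 2, 3]}) := by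
  have hlam' : Antitone lam := antitone_nat_of_succ_le hlam.1
  have hmu' : Antitone mu := antitone_nat_of_succ_le hmu.1
  have hrow_i : mu (i + 1) + 2 ≤ lam i := by have := hmu' (Nat.le_add_right i 1); omega
  refine ⟨card_avoiding_123_shiftThrough hlam' hmu' hrow_i, ?_⟩
  obtain _ | r := i
  · simp
  · have hshift (f : ℕ → ℕ) :
        (fun ℓ => if ℓ < r + 1 then f ℓ + 1 else f ℓ) = shiftThrough r f := by
      simp only [Nat.lt_succ_iff]; rfl
    rw [hshift, hshift]
    exact card_avoiding_123_shiftThrough hlam' hmu' (by have := hlam' (Nat.le_add_right r 1); omega)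

/-- Sliding moves for `123`-avoidance: if all rows of `λ/μ` have length one or two and row
`i` (0-indexed) has length two, then the number of standard Young tableaux with
`123`-avoiding reading word is unchanged when the first `i+1` rows are shifted one step to
the right, and likewise when the first `i` rows are shifted one step to the right. -/
theorem stmt_19 (lam mu : ℕ → ℕ)
    (hlam : IsPartitionFun lam) (hmu : IsPartitionFun mu)
    (hsub : ∀ i, mu i ≤ lam i)
    (hrows : ∀ i, lam i ≠ 0 → lam i - mu i = 1 ∨ lam i - mu i = 2)
    (i : ℕ) (hi : lam i - mu i = 2) :
    (Nat.card {T : SkewSYT lam mu // ¬ ReadingContains T ![1, 2, 3]} =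
      Nat.card {T : SkewSYT (fun ℓ => if ℓ ≤ i then lam ℓ + 1 else lam ℓ)
            (fun ℓ => if ℓ ≤ i then mu ℓ + 1 else mu ℓ) //
          ¬ ReadingContains T ![1, 2, 3]}) ∧
    (Nat.card {T : SkewSYT lam mu // ¬ ReadingContains T ![1, 2, 3]} =
      Nat.card {T : SkewSYT (fun ℓ => if ℓ < i then lam ℓ + 1 else lam ℓ)
            (fun ℓ => if ℓ < i then mu ℓ + 1 else mu ℓ) //
          ¬ ReadingContains T ![1, 2, 3]}) :=
  stmt_19_general lam mu hlam hmu i hi
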